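/- arXiv:2605.03990 — 3 statements merged into one kernel-verified Lean document; each statement's English description precedes it below -/
import Mathlib

section
/- Let S_1,…,S_m be injective contracting maps of ℝⁿ with attractor K (the unique nonempty compact set with K = ⋃_{i=1}^m S_i(K)), and suppose that for any pair i ≠ j the intersection S_i(K) ∩ S_j(K) is empty or a single point (the single-point intersection property). Let C be the set of all these intersection points, and define the bipartite intersection graph Ĝ on the vertex set {1,…,m} ⊔ C with an edge between i and A ∈ C exactly when A ∈ S_i(K). If Ĝ is a tree (connected and acyclic), then K is a dendrite, i.e., a compact, connected, locally connected metric space containing no subset homeomorphic to the circle. -/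
/-!
Since `Ĝ` is connected, any two pieces `S i '' K` are joined by a chain of pieces meeting
consecutively; so each `S i` turns `ε`-chains in `K` into `c ε`-chains, and `K` has `ε`-chains
at every scale, hence is connected. The images of `K` under compositions of `k` maps are
finitely many continua of diameter `≤ c ^ k diam K` covering `K`, which gives local
connectedness. If a circle `J ⊆ K` does not lie in one piece, some `A ∈ C` separates the tree
`Ĝ`, splitting the pieces into two families whose unions meet only at `A`; these disconnect
`J \ {A}`. So every circle lies in some `S i '' K` and pulls back under `S i` to a circle in
`K` at least `1 / c` times larger: the supremum `D` of the diameters of circles in `K`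
satisfies `D ≤ c D`, so `D = 0`.
-/

open Set Metric Function Relation Module
open scoped NNReal ENNReal

theorem IsCompact.isPreconnected_of_forall_chain {X : Type*} [MetricSpace X] {K : Set X}
    (hK : IsCompact K)
    (h : ∀ ε > 0, ∀ x ∈ K, ∀ y ∈ K, ReflTransGen (fun a b => b ∈ K ∧ dist a b ≤ ε) x y) :
    IsPreconnected K := by
  rw [isPreconnected_iff_subset_of_disjoint_closed]
  intro u v hu hv hKuv huv
  obtain ⟨r, hr, hsep⟩ := exists_pos_forall_lt_edist (hK.inter_right hu) hv
    (disjoint_left.2 fun x hx hxv => huv.subset ⟨hx.1, hx.2, hxv⟩)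
  by_contra! ⟨hKu, hKv⟩
  obtain ⟨a, haK, hav⟩ := not_subset.1 hKv
  obtain ⟨b, hbK, hbu⟩ := not_subset.1 hKu
  -- `K ∩ u` is at distance `> r` from `v`, so an `r / 2`-chain cannot leave it
  have hstay : ∀ y, ReflTransGen (fun a b => b ∈ K ∧ dist a b ≤ r / 2) a y → y ∈ K ∩ u := by
    intro y hy
    induction hy with
    | refl => exact ⟨haK, (hKuv haK).resolve_right hav⟩
    | tail _ hstep ih =>
      obtain ⟨hcK, hdist⟩ := hstep
      refine ⟨hcK, (hKuv hcK).resolve_right fun hcv => ?_⟩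
      have hlt := hsep _ ih _ hcv
      rw [edist_dist, ← ENNReal.ofReal_coe_nnreal, ENNReal.ofReal_lt_ofReal_iff'] at hlt
      linarith [hlt.1, r.2]
  exact hbu (hstay b (h _ (half_pos hr) a haK b hbK)).2

theorem locallyConnectedSpace_of_forall_finite_cover {X : Type*} [MetricSpace X] {K : Set X}
    (h : ∀ ε > 0, ∃ 𝒯 : Set (Set X), 𝒯.Finite ∧ ⋃₀ 𝒯 = K ∧
      ∀ T ∈ 𝒯, IsCompact T ∧ IsPreconnected T ∧ diam T ≤ ε) :
    LocallyConnectedSpace K := by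
  rw [locallyConnectedSpace_iff_connected_subsets]
  intro x U hU
  obtain ⟨ε, hε, hball⟩ := Metric.mem_nhds_iff.1 hU
  obtain ⟨𝒯, hfin, hcov, h𝒯⟩ := h (ε / 2) (half_pos hε)
  have hstarK : ⋃₀ {T ∈ 𝒯 | ↑x ∈ T} ⊆ K := (sUnion_mono (sep_subset _ _)).trans hcov.subset
  refine ⟨Subtype.val ⁻¹' ⋃₀ {T ∈ 𝒯 | ↑x ∈ T}, ?_, ?_, ?_⟩
  · have hW : IsClosed (⋃₀ {T ∈ 𝒯 | ↑x ∉ T}) := by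
      rw [sUnion_eq_biUnion]
      exact (hfin.subset (sep_subset _ _)).isClosed_biUnion fun T hT => (h𝒯 T hT.1).1.isClosed
    have hxW : (x : X) ∉ ⋃₀ {T ∈ 𝒯 | ↑x ∉ T} := fun ⟨T, hT, hxT⟩ => hT.2 hxT
    refine Filter.mem_of_superset
      (continuous_subtype_val.continuousAt.preimage_mem_nhds (hW.isOpen_compl.mem_nhds hxW))
      fun y hy => ?_
    obtain ⟨T, hT, hyT⟩ := hcov.symm.subset y.2
    exact ⟨T, ⟨hT, by_contra fun hxT => hy ⟨T, ⟨hT, hxT⟩, hyT⟩⟩, hyT⟩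
  · rw [← Topology.IsInducing.subtypeVal.isPreconnected_image, Subtype.image_preimage_coe,
      inter_eq_right.2 hstarK]
    exact isPreconnected_sUnion (x : X) _ (fun T hT => hT.2) fun T hT => (h𝒯 T hT.1).2.1
  · rintro y ⟨T, hT, hyT⟩
    apply hball
    rw [mem_ball, Subtype.dist_eq]
    calc dist (y : X) x ≤ diam T := dist_le_diam_of_mem (h𝒯 T hT.1).1.isBounded hyT hT.2
      _ ≤ ε / 2 := (h𝒯 T hT.1).2.2
      _ < ε := half_lt_self hε

theorem Monotone.forall_pos_of_imp_mul {P : ℝ → Prop} (hP : Monotone P) {c : ℝ≥0} (hc : c < 1)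
    {D : ℝ} (hD : P D) (hstep : ∀ δ, P δ → P (c * δ)) (ε : ℝ) (hε : 0 < ε) : P ε := by
  have hpow : ∀ k : ℕ, P (c ^ k * D) := by
    intro k
    induction k with
    | zero => simpa using hD
    | succ k ih => simpa [pow_succ', mul_assoc] using hstep _ ih
  have hlim := (tendsto_pow_atTop_nhds_zero_of_lt_one c.2 hc).mul_const D
  rw [zero_mul] at hlim
  obtain ⟨k, hk⟩ := (hlim.eventually (gt_mem_nhds hε)).exists
  exact hP hk.le (hpow k)

theorem ediam_eq_zero_of_forall_exists_le_mul {X : Type*} [PseudoEMetricSpace X]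
    {𝒥 : Set (Set X)} {K : Set X} (hK : ediam K ≠ ⊤) (h𝒥K : ∀ J ∈ 𝒥, J ⊆ K) {c : ℝ≥0}
    (hc : c < 1) (h : ∀ J ∈ 𝒥, ∃ J' ∈ 𝒥, ediam J ≤ c * ediam J') {J : Set X} (hJ : J ∈ 𝒥) :
    ediam J = 0 := by
  set D := ⨆ J ∈ 𝒥, ediam J
  have hD : D ≠ ⊤ := ne_top_of_le_ne_top hK (iSup₂_le fun J hJ => ediam_mono (h𝒥K J hJ))
  have hDc : D ≤ c * D := iSup₂_le fun J hJ =>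
    let ⟨J', hJ', hle⟩ := h J hJ
    hle.trans (by gcongr; exact le_iSup₂ (f := fun J _ => ediam J) J' hJ')
  have hD0 : D = 0 := by
    by_contra hD0
    have := ENNReal.mul_lt_mul_right hD0 hD (ENNReal.coe_lt_one_iff.2 hc)
    rw [mul_one, mul_comm] at this
    exact this.not_ge hDc
  exact nonpos_iff_eq_zero.1 (hD0 ▸ le_iSup₂ (f := fun J _ => ediam J) J hJ)

theorem finite_setOf_mem_inter_of_subsingleton {X ι : Type*} [Finite ι] {A : ι → Set X}
    (hA : ∀ i j, i ≠ j → (A i ∩ A j).Subsingleton) :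
    {x | ∃ i j, i ≠ j ∧ x ∈ A i ∩ A j}.Finite := by
  refine (finite_iUnion fun p : {p : ι × ι // p.1 ≠ p.2} => (hA _ _ p.2).finite).subset ?_
  rintro x ⟨i, j, hij, hx⟩
  exact mem_iUnion.2 ⟨⟨(i, j), hij⟩, hx⟩

section Sphere

variable {E : Type*} [NormedAddCommGroup E] [InnerProductSpace ℝ E] {n : ℕ}

theorem isPreconnected_compl_singleton_sphere [Fact (finrank ℝ E = n + 1)]
    (v : sphere (0 : E) 1) : IsPreconnected ({v}ᶜ : Set (sphere (0 : E) 1)) := by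
  rw [← stereographic'_source (n := n) v, ← (stereographic' n v).symm_image_target_eq_source,
    stereographic'_target]
  exact isPreconnected_univ.image _ (by simpa using (stereographic' n v).continuousOn_symm)

theorem infinite_sphere [Fact (finrank ℝ E = n + 1 + 1)] : Infinite (sphere (0 : E) 1) := by
  have : Nontrivial E := nontrivial_of_finrank_eq_succ (R := ℝ) (n := n + 1) Fact.out
  obtain ⟨v, hv⟩ := (NormedSpace.sphere_nonempty (x := (0 : E))).2 zero_le_one
  let e := stereographic' (n + 1) ⟨v, hv⟩
  have hinj : InjOn e.symm univ := by simpa [e] using e.symm.injOn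
  exact infinite_univ_iff.1 (infinite_of_injOn_mapsTo hinj (mapsTo_univ _ _) infinite_univ)

end Sphere

instance : Fact (finrank ℝ (EuclideanSpace ℝ (Fin 2)) = 1 + 1) := ⟨finrank_euclideanSpace_fin⟩

section Circle

variable {X : Type*} [TopologicalSpace X]

def IsCircle (J : Set X) : Prop := Nonempty (J ≃ₜ sphere (0 : EuclideanSpace ℝ (Fin 2)) 1)

theorem IsCircle.infinite {J : Set X} (hJ : IsCircle J) : J.Infinite :=
  have : Infinite (sphere (0 : EuclideanSpace ℝ (Fin 2)) 1) := infinite_sphere (n := 0)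
  infinite_coe_iff.1 (hJ.some.toEquiv.infinite_iff.2 this)

theorem IsCircle.isCompact {J : Set X} (hJ : IsCircle J) : IsCompact J :=
  isCompact_iff_compactSpace.2 hJ.some.symm.compactSpace

theorem IsCircle.isPreconnected_diff_singleton {J : Set X} (hJ : IsCircle J) (p : X) :
    IsPreconnected (J \ {p}) := by
  obtain ⟨h⟩ := hJ
  rw [sdiff_eq, ← Subtype.image_preimage_coe, Topology.IsInducing.subtypeVal.isPreconnected_image,
    ← h.isPreconnected_image]
  by_cases hp : p ∈ J
  · have : (Subtype.val ⁻¹' {p}ᶜ : Set J) = {⟨p, hp⟩}ᶜ := by ext; simp [Subtype.ext_iff]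
    rw [this, h.image_compl, image_singleton]
    exact isPreconnected_compl_singleton_sphere (n := 1) _
  · have : (Subtype.val ⁻¹' {p}ᶜ : Set J) = univ := by
      ext ⟨y, hy⟩
      simp [ne_of_mem_of_not_mem hy hp]
    rw [this, image_univ_of_surjective h.surjective]
    have hrank : 1 < Module.rank ℝ (EuclideanSpace ℝ (Fin 2)) := by
      rw [← finrank_eq_rank, finrank_euclideanSpace_fin]
      norm_num
    have := Subtype.preconnectedSpace (isConnected_sphere hrank 0 zero_le_one).isPreconnected
    exact isPreconnected_univ

theorem IsCircle.of_homeomorph {J J' : Set X} (hJ : IsCircle J) (e : J' ≃ₜ J) : IsCircle J' :=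
  ⟨e.trans hJ.some⟩

end Circle

theorem exists_homeomorph_of_subset_image {X Y : Type*} [TopologicalSpace X] [TopologicalSpace Y]
    [T2Space Y] {f : X → Y} (hf : Continuous f) {K : Set X} (hK : IsCompact K)
    (hinj : InjOn f K) {J : Set Y} (hJ : IsClosed J) (hJK : J ⊆ f '' K) :
    ∃ J' ⊆ K, f '' J' = J ∧ Nonempty (J' ≃ₜ J) := by
  have himage : f '' (K ∩ f ⁻¹' J) = J := by rw [image_inter_preimage, inter_eq_right.2 hJK]
  have hbij : BijOn f (K ∩ f ⁻¹' J) J :=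
    ⟨fun x hx => hx.2, hinj.mono inter_subset_left, himage.symm.subset⟩
  have : CompactSpace ↥(K ∩ f ⁻¹' J) :=
    isCompact_iff_compactSpace.1 (hK.inter_right (hJ.preimage hf))
  exact ⟨_, inter_subset_left, himage,
    ⟨Continuous.homeoOfEquivCompactToT2 (f := hbij.equiv) (hf.restrict hbij.mapsTo)⟩⟩

namespace SimpleGraph

variable {V : Type*} {G : SimpleGraph V}

theorem IsAcyclic.mem_support_of_mem_path (hG : G.IsAcyclic) {u v w : V} (p : G.Path u w)
    (hv : v ∈ p.1.support) (q : G.Walk u w) : v ∈ q.support := by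
  classical
  have hq : q.bypass = p.1 :=
    congrArg Subtype.val ((hG.subsingleton_path u w).elim ⟨_, q.bypass_isPath⟩ p)
  exact q.support_bypass_subset_support (hq ▸ hv)

variable {α β : Type*}

def incidence (R : α → β → Prop) : SimpleGraph (α ⊕ β) where
  Adj
    | .inl a, .inr b => R a b
    | .inr b, .inl a => R a b
    | _, _ => False
  symm := ⟨by rintro (a | b) (a' | b') h <;> exact h⟩
  loopless := ⟨by rintro (a | b) h <;> exact h⟩

variable {R : α → β → Prop}

@[simp] theorem incidence_adj_inl_inr {a : α} {b : β} :
    (incidence R).Adj (.inl a) (.inr b) ↔ R a b := Iff.rfl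

@[simp] theorem incidence_adj_inr_inl {a : α} {b : β} :
    (incidence R).Adj (.inr b) (.inl a) ↔ R a b := Iff.rfl

@[simp] theorem not_incidence_adj_inl_inl {a a' : α} : ¬(incidence R).Adj (.inl a) (.inl a') :=
  id

@[simp] theorem not_incidence_adj_inr_inr {b b' : β} : ¬(incidence R).Adj (.inr b) (.inr b') :=
  id

theorem Connected.reflTransGen_of_incidence (hG : (incidence R).Connected) (a a' : α) :
    ReflTransGen (fun a a' => ∃ b, R a b ∧ R a' b) a a' := by
  let P : α ⊕ β → Prop := Sum.elim (ReflTransGen (fun a a' => ∃ b, R a b ∧ R a' b) a)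
    fun b => ∃ a', ReflTransGen (fun a a' => ∃ b, R a b ∧ R a' b) a a' ∧ R a' b
  have hP : ∀ v, ReflTransGen (incidence R).Adj (.inl a) v → P v := by
    intro v hv
    induction hv with
    | refl => exact ReflTransGen.refl
    | @tail u v _ huv ih =>
      rcases u with a₁ | b <;> rcases v with a₂ | b'
      · exact absurd huv not_incidence_adj_inl_inl
      · exact ⟨a₁, ih, huv⟩
      · obtain ⟨a₁, h₁, hR⟩ := ih
        exact h₁.tail ⟨b, hR, huv⟩
      · exact absurd huv not_incidence_adj_inr_inr
  exact hP (.inl a') ((reachable_iff_reflTransGen _ _).1 (hG.preconnected _ _))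

theorem IsTree.exists_separating_of_incidence (hG : (incidence R).IsTree) {a a' : α}
    (h : a ≠ a') : ∃ b, R a b ∧ ∃ P : Set α, a ∈ P ∧ a' ∉ P ∧
      ∀ l₁ ∈ P, ∀ l₂ ∉ P, ∀ b', R l₁ b' → R l₂ b' → b' = b := by
  obtain ⟨p, hp, -⟩ := hG.existsUnique_path (.inl a) (.inl a')
  cases p with
  | nil => exact absurd rfl h
  | @cons _ v _ hadj q =>
    rcases v with a₁ | b
    · exact absurd hadj not_incidence_adj_inl_inl
    have hb : ∀ w : (incidence R).Walk (.inl a) (.inl a'), .inr b ∈ w.support :=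
      hG.isAcyclic.mem_support_of_mem_path ⟨_, hp⟩ (by simp)
    refine ⟨b, hadj, {l | ∃ w : (incidence R).Walk (.inl a) (.inl l), .inr b ∉ w.support},
      ⟨.nil, by simp⟩, fun ⟨w, hw⟩ => hw (hb w), ?_⟩
    rintro l₁ ⟨w, hw⟩ l₂ hl₂ b' h₁ h₂
    by_contra hb'
    refine hl₂ ⟨(w.concat (show (incidence R).Adj _ (.inr b') from h₁)).concat
      (show (incidence R).Adj (.inr b') _ from h₂), ?_⟩
    simp [Walk.support_concat, hw, Ne.symm hb']

end SimpleGraph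

open SimpleGraph (incidence)

theorem exists_subset_image_of_isPreconnected_diff_singleton {X ι : Type*} [TopologicalSpace X]
    [Finite ι] {S : ι → X → X} {K C : Set X}
    (hK : K = ⋃ i, S i '' K) (hclosed : ∀ i, IsClosed (S i '' K))
    (hC : ∀ i j, i ≠ j → S i '' K ∩ S j '' K ⊆ C)
    (hT : (incidence fun i (A : C) => (A : X) ∈ S i '' K).IsTree) {J : Set X} (hJK : J ⊆ K)
    {x : X} (hx : x ∈ J \ C) (hJ : ∀ p, IsPreconnected (J \ {p})) : ∃ i, J ⊆ S i '' K := by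
  have hJpiece : ∀ y ∈ J, ∃ l, y ∈ S l '' K := fun y hy => mem_iUnion.1 (hK.subset (hJK hy))
  obtain ⟨i, hxi⟩ := hJpiece x hx.1
  refine ⟨i, fun z hzJ => by_contra fun hzi => ?_⟩
  obtain ⟨j, hzj⟩ := hJpiece z hzJ
  obtain ⟨A, hAi, P, hiP, hjP, hsep⟩ :=
    hT.exists_separating_of_incidence (a := i) (a' := j) (by rintro rfl; exact hzi hzj)
  let F : Set ι → Set X := fun Q => ⋃ l ∈ Q, S l '' K
  have hFclosed : ∀ Q, IsClosed (F Q) := fun Q =>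
    Q.toFinite.isClosed_biUnion fun l _ => hclosed l
  have hmemF : ∀ {Q l y}, l ∈ Q → y ∈ S l '' K → y ∈ F Q := fun hl hy => mem_biUnion hl hy
  have hFF : ∀ y ∈ F P ∩ F Pᶜ, y = A := by
    rintro y ⟨hy₁, hy₂⟩
    obtain ⟨l₁, hl₁, hy₁⟩ := mem_iUnion₂.1 hy₁
    obtain ⟨l₂, hl₂, hy₂⟩ := mem_iUnion₂.1 hy₂
    have hyC : y ∈ C := hC l₁ l₂ (ne_of_mem_of_not_mem hl₁ hl₂) ⟨hy₁, hy₂⟩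
    exact congrArg Subtype.val (hsep l₁ hl₁ l₂ hl₂ ⟨y, hyC⟩ hy₁ hy₂)
  have hcover : J \ {(A : X)} ⊆ F P ∪ F Pᶜ := fun y hy => by
    obtain ⟨l, hl⟩ := hJpiece y hy.1
    by_cases hlP : l ∈ P
    exacts [.inl (hmemF hlP hl), .inr (hmemF hlP hl)]
  have hxA : x ≠ A := fun h => hx.2 (h ▸ A.2)
  have hzA : z ≠ A := fun h => hzi (h ▸ hAi)
  rcases isPreconnected_iff_subset_of_disjoint_closed.1 (hJ A) _ _ (hFclosed P) (hFclosed Pᶜ)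
    hcover (eq_empty_of_forall_notMem fun y ⟨hy, hyF⟩ => hy.2 (hFF y hyF)) with h | h
  · exact hzA (hFF z ⟨h ⟨hzJ, hzA⟩, hmemF hjP hzj⟩)
  · exact hxA (hFF x ⟨hmemF hiP hxi, h ⟨hx.1, hxA⟩⟩)

section Attractor

variable {X ι : Type*} [MetricSpace X] {S : ι → X → X} {c : ℝ≥0} {K : Set X}

theorem forall_chain_of_eq_iUnion_image (hS : ∀ i, LipschitzWith c (S i)) (hc : c < 1)
    (hKb : Bornology.IsBounded K) (hK : K = ⋃ i, S i '' K)
    (hlink : ∀ i j, ReflTransGen (fun a b => (S a '' K ∩ S b '' K).Nonempty) i j) :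
    ∀ ε > 0, ∀ x ∈ K, ∀ y ∈ K, ReflTransGen (fun a b => b ∈ K ∧ dist a b ≤ ε) x y := by
  refine Monotone.forall_pos_of_imp_mul (fun δ δ' hδ h x hx y hy =>
      ReflTransGen.mono (fun _ _ hab => ⟨hab.1, hab.2.trans hδ⟩) x y (h x hx y hy))
    hc (fun x hx y hy => .single ⟨hy, dist_le_diam_of_mem hKb hx hy⟩) fun δ h => ?_
  have hpiece : ∀ l, ∀ p ∈ S l '' K, ∀ q ∈ S l '' K,
      ReflTransGen (fun a b => b ∈ K ∧ dist a b ≤ c * δ) p q := by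
    rintro l _ ⟨a, ha, rfl⟩ _ ⟨b, hb, rfl⟩
    refine ReflTransGen.lift (S l) (fun a b hab =>
      ⟨hK.symm.subset (mem_iUnion.2 ⟨l, mem_image_of_mem _ hab.1⟩), ?_⟩) a b (h a ha b hb)
    exact ((hS l).dist_le_mul a b).trans (mul_le_mul_of_nonneg_left hab.2 c.2)
  intro x hx y hy
  rw [hK, mem_iUnion] at hx hy
  obtain ⟨i, hxi⟩ := hx
  obtain ⟨j, hyj⟩ := hy
  suffices ∀ j, ReflTransGen (fun a b => (S a '' K ∩ S b '' K).Nonempty) i j →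
      ∀ q ∈ S j '' K, ReflTransGen (fun a b => b ∈ K ∧ dist a b ≤ c * δ) x q from
    this j (hlink i j) y hyj
  intro j hij
  induction hij with
  | refl => exact hpiece i x hxi
  | tail _ hkl ih =>
    obtain ⟨z, hzk, hzl⟩ := hkl
    exact fun q hq => (ih z hzk).trans (hpiece _ z hzl q hq)

theorem exists_finite_cover_of_eq_iUnion_image [Finite ι] (hS : ∀ i, LipschitzWith c (S i))
    (hc : c < 1) (hKc : IsCompact K) (hKp : IsPreconnected K) (hK : K = ⋃ i, S i '' K) :
    ∀ ε > 0, ∃ 𝒯 : Set (Set X), 𝒯.Finite ∧ ⋃₀ 𝒯 = K ∧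
      ∀ T ∈ 𝒯, IsCompact T ∧ IsPreconnected T ∧ diam T ≤ ε := by
  refine Monotone.forall_pos_of_imp_mul (fun δ δ' hδ ⟨𝒯, hfin, hcov, hT⟩ =>
      ⟨𝒯, hfin, hcov, fun T h => ⟨(hT T h).1, (hT T h).2.1, (hT T h).2.2.trans hδ⟩⟩)
    hc (D := diam K) ⟨{K}, finite_singleton K, sUnion_singleton K, by
      rintro T rfl
      exact ⟨hKc, hKp, le_rfl⟩⟩ ?_
  rintro δ ⟨𝒯, hfin, hcov, hT⟩
  refine ⟨⋃ i, image (S i) '' 𝒯, finite_iUnion fun i => hfin.image _, ?_, ?_⟩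
  · rw [sUnion_iUnion]
    simp_rw [← image_sUnion, hcov]
    exact hK.symm
  · simp only [mem_iUnion, mem_image]
    rintro _ ⟨i, T, hT𝒯, rfl⟩
    obtain ⟨hTc, hTp, hTd⟩ := hT T hT𝒯
    exact ⟨hTc.image (hS i).continuous, hTp.image _ (hS i).continuous.continuousOn,
      ((hS i).diam_image_le T hTc.isBounded).trans (mul_le_mul_of_nonneg_left hTd c.2)⟩

theorem not_exists_isCircle_subset_of_eq_iUnion_image [Finite ι] {C : Set X}
    (hS : ∀ i, LipschitzWith c (S i)) (hc : c < 1) (hinj : ∀ i, Injective (S i))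
    (hKc : IsCompact K) (hK : K = ⋃ i, S i '' K) (hCfin : C.Finite)
    (hC : ∀ i j, i ≠ j → S i '' K ∩ S j '' K ⊆ C)
    (hT : (incidence fun i (A : C) => (A : X) ∈ S i '' K).IsTree) :
    ¬∃ J ⊆ K, IsCircle J := by
  have hshrink : ∀ J ∈ {J | J ⊆ K ∧ IsCircle J}, ∃ J' ∈ {J | J ⊆ K ∧ IsCircle J},
      ediam J ≤ c * ediam J' := by
    rintro J ⟨hJK, hJ⟩
    obtain ⟨x, hx⟩ := (hJ.infinite.sdiff hCfin).nonempty
    obtain ⟨i, hJi⟩ := exists_subset_image_of_isPreconnected_diff_singleton hK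
      (fun i => (hKc.image (hS i).continuous).isClosed) hC hT hJK hx
      hJ.isPreconnected_diff_singleton
    obtain ⟨J', hJ'K, himage, ⟨e⟩⟩ := exists_homeomorph_of_subset_image (hS i).continuous hKc
      (hinj i).injOn hJ.isCompact.isClosed hJi
    exact ⟨J', ⟨hJ'K, hJ.of_homeomorph e⟩, himage ▸ (hS i).ediam_image_le J'⟩
  rintro ⟨J, hJK, hJ⟩
  exact hJ.infinite (ediam_eq_zero_iff.1 (ediam_eq_zero_of_forall_exists_le_mul
    hKc.isBounded.ediam_ne_top (fun _ hJ => hJ.1) hc hshrink ⟨hJK, hJ⟩)).finite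

end Attractor

/-- Dendrite criterion: if a system of injective contractions of ℝⁿ
has the single-point intersection property and its bipartite intersection graph is
a tree, then the attractor is a dendrite. -/
theorem dendrite_criterion {n m : ℕ}
    (S : Fin m → EuclideanSpace ℝ (Fin n) → EuclideanSpace ℝ (Fin n))
    (r : Fin m → NNReal) (hr : ∀ i, r i < 1)
    (hLip : ∀ i, LipschitzWith (r i) (S i))
    (hInj : ∀ i, Function.Injective (S i))
    (K : Set (EuclideanSpace ℝ (Fin n)))
    (hKne : K.Nonempty) (hKcomp : IsCompact K)
    (hK : K = ⋃ i, (S i) '' K)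
    (hSIP : ∀ i j, i ≠ j → ((S i '' K) ∩ (S j '' K)).Subsingleton)
    (C : Set (EuclideanSpace ℝ (Fin n)))
    (hC : C = {x | ∃ i j, i ≠ j ∧ x ∈ (S i '' K) ∩ (S j '' K)})
    (G : SimpleGraph (Fin m ⊕ ↥C))
    (hG : ∀ u v, G.Adj u v ↔
      (∃ (i : Fin m) (A : ↥C), u = Sum.inl i ∧ v = Sum.inr A ∧ (A : EuclideanSpace ℝ (Fin n)) ∈ S i '' K) ∨
      (∃ (i : Fin m) (A : ↥C), u = Sum.inr A ∧ v = Sum.inl i ∧ (A : EuclideanSpace ℝ (Fin n)) ∈ S i '' K))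
    (hTree : G.IsTree) :
    IsCompact K ∧ IsConnected K ∧ LocallyConnectedSpace ↥K ∧
      ¬ ∃ A ⊆ K, Nonempty (↥A ≃ₜ ↥(Metric.sphere (0 : EuclideanSpace ℝ (Fin 2)) 1)) := by
  obtain ⟨c, hc, hS⟩ : ∃ c < 1, ∀ i, LipschitzWith c (S i) :=
    ⟨Finset.univ.sup r, (Finset.sup_lt_iff zero_lt_one).2 fun i _ => hr i,
      fun i => (hLip i).weaken (Finset.le_sup (Finset.mem_univ i))⟩
  have hGinc : G = incidence fun i (A : C) => (A : EuclideanSpace ℝ (Fin n)) ∈ S i '' K := by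
    ext (i | A) (j | B) <;> simp [hG]
  subst hGinc
  have hKp : IsPreconnected K := hKcomp.isPreconnected_of_forall_chain
    (forall_chain_of_eq_iUnion_image hS hc hKcomp.isBounded hK fun i j =>
      ReflTransGen.mono (fun _ _ ⟨A, hA, hA'⟩ => ⟨A, hA, hA'⟩) _ _
        (hTree.connected.reflTransGen_of_incidence i j))
  have hCfin : C.Finite := hC ▸ finite_setOf_mem_inter_of_subsingleton hSIP
  have hCsub : ∀ i j, i ≠ j → S i '' K ∩ S j '' K ⊆ C := fun i j hij x hx => by
    rw [hC]
    exact ⟨i, j, hij, hx⟩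
  exact ⟨hKcomp, ⟨hKne, hKp⟩, locallyConnectedSpace_of_forall_finite_cover
    (exists_finite_cover_of_eq_iUnion_image hS hc hKcomp hKp hK),
    not_exists_isCircle_subset_of_eq_iUnion_image hS hc hInj hKcomp hK hCfin hCsub hTree⟩
end

section
/- Let S_1,…,S_m be contractive affine maps of ℝ² and let P ⊂ ℝ² be a compact set with nonempty interior. For a finite multiindex 𝐢 = i_1…i_n let S_𝐢 = S_{i_1}∘⋯∘S_{i_n}, and define Q_𝐢 = max{ ‖S_𝐢(x) − S_𝐢(y)‖ / ‖x − y‖ : x, y ∈ P, x ≠ y } and q_𝐢 = min{ ‖S_𝐢(x) − S_𝐢(y)‖ / ‖x − y‖ : x, y ∈ P, x ≠ y }. Set λ = min_{i ∈ {1,…,m}} (log Q_i / log q_i). Then for every finite multiindex 𝐢, one has Q_𝐢 ≤ q_𝐢^λ. -/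
/-!
The distortion ratio of an affine map on a pair `x ≠ y` depends only on the direction `x - y`,
and since `P` has nonempty interior every direction is realised by a pair of points of `P`.
Hence the distortion ratio of `S_i ∘ S_𝐣` at `(x, y)` factors as a ratio of `S_i` times a ratio
of `S_𝐣`, which makes `Q` submultiplicative and `q` supermultiplicative along multiindices.
The choice of `λ` gives `Q_i ≤ q_i ^ λ` for single indices, and induction on the length of `𝐢`
propagates this, using `λ ≥ 0` (as `Q_i, q_i < 1`) for the monotonicity of `t ↦ t ^ λ`.
-/

/-- Composition `S i₁ ∘ S i₂ ∘ ⋯ ∘ S iₙ` along a multiindex given as a list. -/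
def compList {m : ℕ} {E : Type*} (S : Fin m → E → E) : List (Fin m) → E → E
  | [] => id
  | i :: l => S i ∘ compList S l

/-- The set of distortion ratios `‖F x - F y‖ / ‖x - y‖` over distinct points of `P`. -/
def ratioSet (F : EuclideanSpace ℝ (Fin 2) → EuclideanSpace ℝ (Fin 2))
    (P : Set (EuclideanSpace ℝ (Fin 2))) : Set ℝ :=
  {t | ∃ x ∈ P, ∃ y ∈ P, x ≠ y ∧ t = ‖F x - F y‖ / ‖x - y‖}

open Function Filter Topology Pointwise

local notation "ℝ²" => EuclideanSpace ℝ (Fin 2)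

lemma compList_injective {m : ℕ} {E : Type*} {S : Fin m → E → E} (hS : ∀ i, Injective (S i)) :
    ∀ l : List (Fin m), Injective (compList S l)
  | [] => injective_id
  | i :: l => (hS i).comp (compList_injective hS l)

lemma exists_pos_add_smul_mem_of_mem_interior {E : Type*} [NormedAddCommGroup E]
    [NormedSpace ℝ E] {s : Set E} {z : E} (hz : z ∈ interior s) (w : E) :
    ∃ c : ℝ, 0 < c ∧ z + c • w ∈ s := by
  have hlim : Tendsto (fun c : ℝ => z + c • w) (𝓝 0) (𝓝 z) := by
    simpa using tendsto_const_nhds.add ((tendsto_id (x := 𝓝 (0 : ℝ))).smul_const w)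
  have hev : ∀ᶠ c in 𝓝[>] (0 : ℝ), z + c • w ∈ s :=
    nhdsWithin_le_nhds (hlim.eventually (mem_interior_iff_mem_nhds.mp hz))
  obtain ⟨c, hcs, hc⟩ := (hev.and self_mem_nhdsWithin).exists
  exact ⟨c, hc, hcs⟩

section ratioSet

variable {P : Set ℝ²} {F : ℝ² → ℝ²} {t : ℝ}

lemma ratioSet_nonneg (ht : t ∈ ratioSet F P) : 0 ≤ t := by
  obtain ⟨x, -, y, -, -, rfl⟩ := ht
  positivity

lemma ratioSet_pos (hF : Injective F) (ht : t ∈ ratioSet F P) : 0 < t := by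
  obtain ⟨x, -, y, -, hxy, rfl⟩ := ht
  exact div_pos (norm_pos_iff.mpr (sub_ne_zero.mpr (hF.ne hxy))) (norm_pos_iff.mpr (sub_ne_zero.mpr hxy))

lemma ratioSet_le_of_lipschitzWith {K : NNReal} (hF : LipschitzWith K F) (ht : t ∈ ratioSet F P) :
    t ≤ K := by
  obtain ⟨x, -, y, -, hxy, rfl⟩ := ht
  rw [div_le_iff₀ (norm_pos_iff.mpr (sub_ne_zero.mpr hxy)), ← dist_eq_norm, ← dist_eq_norm]
  exact hF.dist_le_mul x y

lemma ratio_mem_ratioSet (hP : (interior P).Nonempty)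
    (f : ℝ² →ᵃ[ℝ] ℝ²) {u v : ℝ²} (huv : u ≠ v) : ‖f u - f v‖ / ‖u - v‖ ∈ ratioSet f P := by
  obtain ⟨z, hz⟩ := hP
  obtain ⟨c, hc, hcP⟩ := exists_pos_add_smul_mem_of_mem_interior hz (u - v)
  have hf : ∀ x y, f x - f y = f.linear (x - y) := fun x y => (f.linearMap_vsub x y).symm
  refine ⟨z + c • (u - v), hcP, z, interior_subset hz, ?_, ?_⟩
  · simpa [hc.ne'] using sub_ne_zero.mpr huv
  · rw [hf, hf, add_sub_cancel_left, map_smul, norm_smul, norm_smul,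
      mul_div_mul_left _ _ (norm_pos_iff.mpr hc.ne').ne']

lemma ratioSet_comp_subset_mul (hP : (interior P).Nonempty)
    (f : ℝ² →ᵃ[ℝ] ℝ²) (hF : Injective F) :
    ratioSet (f ∘ F) P ⊆ ratioSet f P * ratioSet F P := by
  rintro _ ⟨x, hx, y, hy, hxy, rfl⟩
  have hFxy : F x - F y ≠ 0 := sub_ne_zero.mpr (hF.ne hxy)
  refine Set.mem_mul.mpr ⟨_, ratio_mem_ratioSet hP f (hF.ne hxy), _, ⟨x, hx, y, hy, hxy, rfl⟩, ?_⟩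
  rw [comp_apply, comp_apply, div_mul_div_cancel₀ (norm_ne_zero_iff.mpr hFxy)]

end ratioSet

section products

variable {A B s : Set ℝ} {a b c : ℝ}

lemma le_mul_of_mem_upperBounds (hs : s ⊆ A * B) (hA₀ : ∀ x ∈ A, 0 ≤ x)
    (hB₀ : ∀ y ∈ B, 0 ≤ y) (hc : c ∈ s) (ha : a ∈ upperBounds A) (hb : b ∈ upperBounds B) :
    c ≤ a * b := by
  obtain ⟨x, hx, y, hy, rfl⟩ := Set.mem_mul.mp (hs hc)
  exact mul_le_mul (ha hx) (hb hy) (hB₀ y hy) ((hA₀ x hx).trans (ha hx))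

lemma mul_le_of_mem_lowerBounds (hs : s ⊆ A * B) (ha₀ : 0 ≤ a) (hb₀ : 0 ≤ b)
    (hc : c ∈ s) (ha : a ∈ lowerBounds A) (hb : b ∈ lowerBounds B) : a * b ≤ c := by
  obtain ⟨x, hx, y, hy, rfl⟩ := Set.mem_mul.mp (hs hc)
  exact mul_le_mul (ha hx) (hb hy) hb₀ (ha₀.trans (ha hx))

end products

lemma le_rpow_of_le_log_div_log {Q q lam : ℝ} (hQ : 0 < Q) (hq : 0 < q) (hq₁ : q < 1)
    (h : lam ≤ Real.log Q / Real.log q) : Q ≤ q ^ lam := by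
  rw [Real.le_rpow_iff_log_le hQ hq]
  exact (le_div_iff_of_neg (Real.log_neg hq hq₁)).mp h

lemma le_rpow_of_submultiplicative {ι : Type*} {Q q : List ι → ℝ} {lam : ℝ} (hlam : 0 ≤ lam)
    (hQ₀ : ∀ l, 0 ≤ Q l) (hq₀ : ∀ l, 0 ≤ q l)
    (hQmul : ∀ i l, Q (i :: l) ≤ Q [i] * Q l) (hqmul : ∀ i l, q [i] * q l ≤ q (i :: l))
    (hbase : ∀ i, Q [i] ≤ q [i] ^ lam) : ∀ l, l ≠ [] → Q l ≤ q l ^ lam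
  | [], h => absurd rfl h
  | [i], _ => hbase i
  | i :: j :: l, _ =>
    calc Q (i :: j :: l) ≤ Q [i] * Q (j :: l) := hQmul i (j :: l)
      _ ≤ q [i] ^ lam * q (j :: l) ^ lam :=
        mul_le_mul (hbase i) (le_rpow_of_submultiplicative hlam hQ₀ hq₀ hQmul hqmul hbase
          (j :: l) (List.cons_ne_nil j l)) (hQ₀ _) (Real.rpow_nonneg (hq₀ _) lam)
      _ = (q [i] * q (j :: l)) ^ lam := (Real.mul_rpow (hq₀ _) (hq₀ _)).symm
      _ ≤ q (i :: j :: l) ^ lam :=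
        Real.rpow_le_rpow (mul_nonneg (hq₀ _) (hq₀ _)) (hqmul i (j :: l)) hlam

theorem max_distortion_le_min_distortion_rpow_general {m : ℕ}
    (P : Set (EuclideanSpace ℝ (Fin 2)))
    (hPint : (interior P).Nonempty)
    (S : Fin m → (EuclideanSpace ℝ (Fin 2)) →ᵃ[ℝ] (EuclideanSpace ℝ (Fin 2)))
    (r : Fin m → NNReal) (hr : ∀ i, r i < 1)
    (hLip : ∀ i, LipschitzWith (r i) (S i))
    (hInj : ∀ i, Function.Injective (S i).linear)
    (Q q : List (Fin m) → ℝ)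
    (hQ : ∀ l : List (Fin m), IsGreatest (ratioSet (compList (fun i => ⇑(S i)) l) P) (Q l))
    (hq : ∀ l : List (Fin m), IsLeast (ratioSet (compList (fun i => ⇑(S i)) l) P) (q l))
    (lam : ℝ)
    (hlam : IsLeast {t | ∃ i : Fin m, t = Real.log (Q [i]) / Real.log (q [i])} lam) :
    ∀ l : List (Fin m), l ≠ [] → Q l ≤ (q l) ^ lam := by
  have hcompInj := compList_injective fun i => (S i).linear_injective_iff.mp (hInj i)
  have hqpos l : 0 < q l := ratioSet_pos (hcompInj l) (hq l).1
  have hQpos l : 0 < Q l := (hqpos l).trans_le ((hq l).2 (hQ l).1)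
  have hQlt i : Q [i] < 1 :=
    (ratioSet_le_of_lipschitzWith (hLip i) (hQ [i]).1).trans_lt (by exact_mod_cast hr i)
  have hqlt i : q [i] < 1 := ((hq [i]).2 (hQ [i]).1).trans_lt (hQlt i)
  have hlam₀ : 0 ≤ lam := by
    obtain ⟨i, rfl⟩ := hlam.1
    exact div_nonneg_of_nonpos (Real.log_nonpos (hQpos _).le (hQlt i).le)
      (Real.log_neg (hqpos _) (hqlt i)).le
  refine le_rpow_of_submultiplicative hlam₀ (fun l => (hQpos l).le) (fun l => (hqpos l).le)
    (fun i l => ?_) (fun i l => ?_)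
    (fun i => le_rpow_of_le_log_div_log (hQpos _) (hqpos _) (hqlt i) (hlam.2 ⟨i, rfl⟩))
  · exact le_mul_of_mem_upperBounds (ratioSet_comp_subset_mul hPint (S i) (hcompInj l))
      (fun _ => ratioSet_nonneg) (fun _ => ratioSet_nonneg) (hQ (i :: l)).1 (hQ [i]).2 (hQ l).2
  · exact mul_le_of_mem_lowerBounds (ratioSet_comp_subset_mul hPint (S i) (hcompInj l))
      (hqpos _).le (hqpos _).le (hq (i :: l)).1 (hq [i]).2 (hq l).2

/-- with `Q_𝐢`, `q_𝐢` the maximal and minimal distortions of `S_𝐢` over `P`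
and `λ = min_i (log Q_i / log q_i)`, one has `Q_𝐢 ≤ q_𝐢 ^ λ` for every multiindex `𝐢`. -/
theorem max_distortion_le_min_distortion_rpow {m : ℕ}
    (P : Set (EuclideanSpace ℝ (Fin 2)))
    (hPcomp : IsCompact P) (hPint : (interior P).Nonempty)
    (S : Fin m → (EuclideanSpace ℝ (Fin 2)) →ᵃ[ℝ] (EuclideanSpace ℝ (Fin 2)))
    (r : Fin m → NNReal) (hr : ∀ i, r i < 1)
    (hLip : ∀ i, LipschitzWith (r i) (S i))
    (hInj : ∀ i, Function.Injective (S i).linear)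
    (Q q : List (Fin m) → ℝ)
    (hQ : ∀ l : List (Fin m), IsGreatest (ratioSet (compList (fun i => ⇑(S i)) l) P) (Q l))
    (hq : ∀ l : List (Fin m), IsLeast (ratioSet (compList (fun i => ⇑(S i)) l) P) (q l))
    (lam : ℝ)
    (hlam : IsLeast {t | ∃ i : Fin m, t = Real.log (Q [i]) / Real.log (q [i])} lam) :
    ∀ l : List (Fin m), l ≠ [] → Q l ≤ (q l) ^ lam :=
  max_distortion_le_min_distortion_rpow_general P hPint S r hr hLip hInj Q q hQ hq lam hlam
end

section
/- Let P be a convex polygon in ℝ² with vertex set V, and let S_1,…,S_m be contractive affine maps forming a simply connected self-affine P-polygonal system with attractor K. For finite multiindices 𝐢 and 𝐣, write P_𝐢 = S_𝐢(P) and K_𝐢 = S_𝐢(K). Then P_𝐢 ⊂ P_𝐣 if and only if K_𝐢 ⊂ K_𝐣. -/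
/-!
The vertices satisfy `V ⊆ ⋃ S_i(V)` and the maps contract, so `V ⊆ K`; hence `P` is the convex
hull of `K` and every `P_𝐢` is the convex hull of `K_𝐢`, which gives `K_𝐢 ⊆ K_𝐣 → P_𝐢 ⊆ P_𝐣`.

For the converse it suffices that `K ∩ P_𝐣 ⊆ K_𝐣`, proved by induction on `𝐣 = j𝐯`. A point
`S_j z ∈ K` with `z ∈ P_𝐯` lies in some `S_i(K)`. If `S_j` is injective, then either `i = j`, or
the point is a common vertex of `S_i(P)` and `S_j(P)`; either way `z ∈ K`. If `S_j` is singular it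
has rank at most one, so it maps the connected set `K_𝐯` onto a segment, which is then all of
`S_j(P_𝐯)`. Connectedness of `K`: it is the nested intersection of the iterates `H^n(P)` of the
Hutchinson operator `H`, and each of them is connected because the pieces `S_i(P)` are chained by
common vertices, which lie in `K ⊆ H^n(P)`.
-/

open Set Module Function Filter Topology Relation
open scoped NNReal

theorem isPreconnected_iInter_of_antitone {X : Type*} [TopologicalSpace X] [T2Space X]
    {U : ℕ → Set X} (hU : Antitone U) (hc : ∀ n, IsCompact (U n))
    (hp : ∀ n, IsPreconnected (U n)) : IsPreconnected (⋂ n, U n) := by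
  have hC : IsCompact (⋂ n, U n) :=
    (hc 0).of_isClosed_subset (isClosed_iInter fun n => (hc n).isClosed) (iInter_subset _ 0)
  rw [isPreconnected_iff_subset_of_fully_disjoint_closed hC.isClosed]
  intro u v hu hv hCuv huv
  obtain ⟨u', v', hu', hv', hCu, hCv, huv'⟩ := SeparatedNhds.of_isCompact_isCompact
    (hC.inter_right hu) (hC.inter_right hv) (huv.mono inter_subset_right inter_subset_right)
  obtain ⟨n, hn⟩ : ∃ n, U n ⊆ u' ∪ v' := by
    refine exists_subset_nhds_of_isCompact' hU.directed_ge hc (fun n => (hc n).isClosed)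
      fun x hx => (hu'.union hv').mem_nhds ?_
    rcases hCuv hx with h | h
    exacts [Or.inl (hCu ⟨hx, h⟩), Or.inr (hCv ⟨hx, h⟩)]
  refine ((hp n).subset_or_subset hu' hv' huv' hn).imp (fun h x hx => ?_) (fun h x hx => ?_)
  · refine (hCuv hx).resolve_right fun hxv => huv'.le_bot ⟨h ?_, hCv ⟨hx, hxv⟩⟩
    exact mem_iInter.1 hx n
  · refine (hCuv hx).resolve_left fun hxu => huv'.le_bot ⟨hCu ⟨hx, hxu⟩, h ?_⟩
    exact mem_iInter.1 hx n

theorem reflTransGen_of_isPreconnected_iUnion {X ι : Type*} [TopologicalSpace X] [Finite ι]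
    {s : ι → Set X} (hs : ∀ i, IsClosed (s i)) (hne : ∀ i, (s i).Nonempty)
    (h : IsPreconnected (⋃ i, s i)) (i j : ι) :
    ReflTransGen (fun a b => (s a ∩ s b).Nonempty) i j := by
  set T := {k | ReflTransGen (fun a b => (s a ∩ s b).Nonempty) i k}
  have hclosed : ∀ t : Set ι, IsClosed (⋃ k ∈ t, s k) := fun t =>
    (toFinite t).isClosed_biUnion fun k _ => hs k
  have hcover : ⋃ k, s k ⊆ (⋃ k ∈ T, s k) ∪ ⋃ k ∈ Tᶜ, s k := by
    rw [← biUnion_union, union_compl_self, biUnion_univ]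
  have hdisj : Disjoint (⋃ k ∈ T, s k) (⋃ k ∈ Tᶜ, s k) := by
    simp only [Set.disjoint_left, mem_iUnion₂]
    rintro x ⟨k, hk, hxk⟩ ⟨l, hl, hxl⟩
    exact hl (ReflTransGen.tail hk ⟨x, hxk, hxl⟩)
  rcases (isPreconnected_iff_subset_of_fully_disjoint_closed (isClosed_iUnion_of_finite hs)).1 h
    _ _ (hclosed T) (hclosed Tᶜ) hcover hdisj with hT | hTc
  · obtain ⟨x, hx⟩ := hne j
    obtain ⟨k, hk, hxk⟩ := mem_iUnion₂.1 (hT (mem_iUnion_of_mem j hx))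
    exact ReflTransGen.tail hk ⟨x, hxk, hx⟩
  · obtain ⟨x, hx⟩ := hne i
    obtain ⟨k, hk, hxk⟩ := mem_iUnion₂.1 (hTc (mem_iUnion_of_mem i hx))
    exact absurd (ReflTransGen.single ⟨x, hx, hxk⟩) hk

theorem LinearMap.exists_eq_comp_of_finrank_range_le_one {K V W : Type*} [Field K]
    [AddCommGroup V] [Module K V] [FiniteDimensional K V] [AddCommGroup W] [Module K W]
    (f : V →ₗ[K] W) (hf : finrank K (range f) ≤ 1) :
    ∃ (φ : V →ₗ[K] K) (ψ : K →ₗ[K] W), f = ψ ∘ₗ φ := by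
  rcases Nat.le_one_iff_eq_zero_or_eq_one.1 hf with h | h
  · exact ⟨0, 0, by simpa using range_eq_bot.1 (Submodule.finrank_eq_zero.1 h)⟩
  · let e := LinearEquiv.ofFinrankEq (range f) K (by rw [h, finrank_self])
    exact ⟨e ∘ₗ f.rangeRestrict, (range f).subtype ∘ₗ e.symm.toLinearMap, by ext x; simp⟩

theorem LinearMap.finrank_range_le_one_of_not_injective {K V : Type*} [Field K] [AddCommGroup V]
    [Module K V] [FiniteDimensional K V] (hV : finrank K V = 2) {f : V →ₗ[K] V}
    (hf : ¬Injective f) : finrank K (range f) ≤ 1 := by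
  have hlt := Submodule.finrank_lt fun h => hf (injective_iff_surjective.2 (range_eq_top.1 h))
  omega

theorem AffineMap.convex_image_of_finrank_range_le_one {E F : Type*} [NormedAddCommGroup E]
    [NormedSpace ℝ E] [FiniteDimensional ℝ E] [AddCommGroup F] [Module ℝ F] (T : E →ᵃ[ℝ] F)
    (hT : finrank ℝ (LinearMap.range T.linear) ≤ 1) {A : Set E} (hA : IsPreconnected A) :
    Convex ℝ (T '' A) := by
  obtain ⟨φ, ψ, hTφψ⟩ := T.linear.exists_eq_comp_of_finrank_range_le_one hT
  have himage : T '' A = (fun y => T 0 + y) '' (ψ '' (φ '' A)) := by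
    simp only [image_image]
    refine image_congr fun x _ => ?_
    rw [T.decomp, hTφψ]
    simp [add_comm]
  rw [himage]
  have hφA : Convex ℝ (φ '' A) :=
    (hA.image φ φ.continuous_of_finiteDimensional.continuousOn).ordConnected.convex
  exact (hφA.linear_image ψ).translate (T 0)

theorem AffineMap.image_convexHull_eq_of_not_injective {E : Type*} [NormedAddCommGroup E]
    [NormedSpace ℝ E] [FiniteDimensional ℝ E] (hE : finrank ℝ E = 2) {T : E →ᵃ[ℝ] E}
    (hT : ¬Injective T) {C : Set E} (hC : IsPreconnected C) :
    T '' convexHull ℝ C = T '' C := by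
  rw [T.image_convexHull]
  exact (T.convex_image_of_finrank_range_le_one (LinearMap.finrank_range_le_one_of_not_injective
    hE (mt T.linear_injective_iff.1 hT)) hC).convexHull_eq

theorem Set.Finite.convexHull_extremePoints_convexHull {E : Type*} [NormedAddCommGroup E]
    [NormedSpace ℝ E] {s : Set E} (hs : s.Finite) :
    convexHull ℝ (extremePoints ℝ (convexHull ℝ s)) = convexHull ℝ s := by
  have hfin : (extremePoints ℝ (convexHull ℝ s)).Finite :=
    hs.subset extremePoints_convexHull_subset
  rw [← (hfin.isCompact_convexHull ℝ).isClosed.closure_eq]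
  exact closure_convexHull_extremePoints (hs.isCompact_convexHull ℝ) (convex_convexHull ℝ s)

theorem exists_lipschitzWith_lt_one {ι X Y : Type*} [Finite ι] [PseudoEMetricSpace X]
    [PseudoEMetricSpace Y] {S : ι → X → Y} {r : ι → ℝ≥0} (hr : ∀ i, r i < 1)
    (hS : ∀ i, LipschitzWith (r i) (S i)) : ∃ c < 1, ∀ i, LipschitzWith c (S i) := by
  have := Fintype.ofFinite ι
  exact ⟨Finset.univ.sup r, (Finset.sup_lt_iff zero_lt_one).2 fun i _ => hr i,
    fun i => (hS i).weaken (Finset.le_sup (Finset.mem_univ i))⟩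

def hutchinsonOp {ι X : Type*} (S : ι → X → X) (s : Set X) : Set X :=
  ⋃ i, S i '' s

section Hutchinson

variable {ι X : Type*} {S : ι → X → X}

theorem hutchinsonOp_mono : Monotone (hutchinsonOp S) :=
  fun _ _ h => iUnion_mono fun _ => image_mono h

theorem IsPreconnected.hutchinsonOp [TopologicalSpace X] {s K : Set X}
    (hS : ∀ i, Continuous (S i)) (hs : IsPreconnected s) (hKs : K ⊆ s)
    (hchain : ∀ i j, ReflTransGen (fun a b => (S a '' K ∩ S b '' K).Nonempty) i j) :
    IsPreconnected (hutchinsonOp S s) :=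
  IsPreconnected.iUnion_of_reflTransGen (fun i => hs.image _ (hS i).continuousOn) fun i j =>
    ReflTransGen.mono (fun _ _ h => h.mono (inter_subset_inter (image_mono hKs) (image_mono hKs)))
      i j (hchain i j)

variable [MetricSpace X] {c : ℝ≥0} {A B : Set X}

theorem exists_dist_le_of_mem_iterate_hutchinsonOp (hS : ∀ i, LipschitzWith c (S i))
    (hA : hutchinsonOp S A ⊆ A) {D : ℝ} (hB : ∀ x ∈ B, ∃ a ∈ A, dist x a ≤ D) (n : ℕ) :
    ∀ x ∈ (hutchinsonOp S)^[n] B, ∃ a ∈ A, dist x a ≤ c ^ n * D := by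
  induction n with
  | zero => simpa using hB
  | succ n ih =>
    rw [iterate_succ_apply']
    intro y hy
    obtain ⟨i, x, hx, rfl⟩ : ∃ i, ∃ x ∈ (hutchinsonOp S)^[n] B, S i x = y := by
      simpa [hutchinsonOp] using hy
    obtain ⟨a, ha, hxa⟩ := ih x hx
    refine ⟨S i a, hA (mem_iUnion_of_mem i (mem_image_of_mem _ ha)), ?_⟩
    calc dist (S i x) (S i a) ≤ c * dist x a := (hS i).dist_le_mul x a
      _ ≤ c * (c ^ n * D) := by gcongr
      _ = c ^ (n + 1) * D := by ring

theorem iInter_iterate_hutchinsonOp_subset (hc : c < 1) (hS : ∀ i, LipschitzWith c (S i))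
    (hA : IsClosed A) (hAne : A.Nonempty) (hAS : hutchinsonOp S A ⊆ A)
    (hB : Bornology.IsBounded B) : ⋂ n, (hutchinsonOp S)^[n] B ⊆ A := by
  obtain ⟨a₀, ha₀⟩ := hAne
  obtain ⟨D, hD⟩ := hB.subset_closedBall a₀
  have hlim : Tendsto (fun n : ℕ => (c : ℝ) ^ n * D) atTop (𝓝 0) := by
    simpa using (tendsto_pow_atTop_nhds_zero_of_lt_one c.coe_nonneg hc).mul_const D
  intro x hx
  rw [← hA.closure_eq, Metric.mem_closure_iff]
  intro ε hε
  obtain ⟨n, hn⟩ := (hlim.eventually (gt_mem_nhds hε)).exists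
  obtain ⟨a, ha, hxa⟩ := exists_dist_le_of_mem_iterate_hutchinsonOp hS hAS
    (fun x hx => ⟨a₀, ha₀, hD hx⟩) n x (mem_iInter.1 hx n)
  exact ⟨a, ha, hxa.trans_lt hn⟩

theorem subset_of_subset_hutchinsonOp (hc : c < 1) (hS : ∀ i, LipschitzWith c (S i))
    (hA : IsClosed A) (hAne : A.Nonempty) (hAS : hutchinsonOp S A ⊆ A)
    (hB : Bornology.IsBounded B) (hBS : B ⊆ hutchinsonOp S B) : B ⊆ A := by
  refine (subset_iInter fun n => ?_).trans (iInter_iterate_hutchinsonOp_subset hc hS hA hAne hAS hB)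
  induction n with
  | zero => rfl
  | succ n ih => exact hBS.trans (by rw [iterate_succ_apply']; exact hutchinsonOp_mono ih)

theorem isPreconnected_of_hutchinsonOp_eq [Finite ι] (hc : c < 1)
    (hS : ∀ i, LipschitzWith c (S i)) {P K : Set X} (hP : IsCompact P) (hPconn : IsPreconnected P)
    (hSP : hutchinsonOp S P ⊆ P) (hK : IsClosed K) (hKne : K.Nonempty)
    (hKS : hutchinsonOp S K = K) (hKP : K ⊆ P)
    (hchain : ∀ i j, ReflTransGen (fun a b => (S a '' K ∩ S b '' K).Nonempty) i j) :
    IsPreconnected K := by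
  have hKiter : ∀ n, K ⊆ (hutchinsonOp S)^[n] P := fun n =>
    (iterate_fixed hKS n).symm.subset.trans (hutchinsonOp_mono.iterate n hKP)
  have hK_eq : K = ⋂ n, (hutchinsonOp S)^[n] P := (subset_iInter hKiter).antisymm
    (iInter_iterate_hutchinsonOp_subset hc hS hK hKne hKS.subset hP.isBounded)
  rw [hK_eq]
  refine isPreconnected_iInter_of_antitone
    (antitone_nat_of_succ_le fun n => ?_) (fun n => ?_) (fun n => ?_)
  · rw [iterate_succ_apply]
    exact hutchinsonOp_mono.iterate n hSP
  · induction n with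
    | zero => exact hP
    | succ n ih =>
      rw [iterate_succ_apply']
      exact isCompact_iUnion fun i => ih.image (hS i).continuous
  · induction n with
    | zero => exact hPconn
    | succ n ih =>
      rw [iterate_succ_apply']
      exact ih.hutchinsonOp (fun i => (hS i).continuous) (hKiter n) hchain

end Hutchinson

section CompList

variable {m : ℕ} {α : Type*} {S : Fin m → α → α}

theorem image_compList_cons (i : Fin m) (l : List (Fin m)) (s : Set α) :
    compList S (i :: l) '' s = S i '' (compList S l '' s) :=
  image_comp _ _ _

theorem image_compList_subset {s : Set α} (hS : ∀ i, S i '' s ⊆ s) :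
    ∀ l, compList S l '' s ⊆ s
  | [] => (image_id s).subset
  | i :: l => by
    rw [image_compList_cons]
    exact (image_mono (image_compList_subset hS l)).trans (hS i)

theorem continuous_compList [TopologicalSpace α] (hS : ∀ i, Continuous (S i)) :
    ∀ l, Continuous (compList S l)
  | [] => continuous_id
  | i :: l => (hS i).comp (continuous_compList hS l)

theorem image_compList_convexHull {E : Type*} [AddCommGroup E] [Module ℝ E]
    (S : Fin m → E →ᵃ[ℝ] E) (s : Set E) : ∀ l,
    compList (fun i => ⇑(S i)) l '' convexHull ℝ s =
      convexHull ℝ (compList (fun i => ⇑(S i)) l '' s)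
  | [] => by simp only [compList, image_id]
  | i :: l => by
    rw [image_compList_cons, image_compList_cons, image_compList_convexHull S s l,
      AffineMap.image_convexHull]

end CompList

theorem reflTransGen_image_inter_nonempty {X ι : Type*} [TopologicalSpace X] [T2Space X]
    [Finite ι] {S : ι → X → X} {P K : Set X} (hS : ∀ i, Continuous (S i)) (hP : IsCompact P)
    (hPne : P.Nonempty) (hconn : IsPreconnected (⋃ i, S i '' P)) (hKne : K.Nonempty)
    (hPK : ∀ a b, a ≠ b → S a '' P ∩ S b '' P ⊆ S a '' K ∩ S b '' K) (i j : ι) :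
    ReflTransGen (fun a b => (S a '' K ∩ S b '' K).Nonempty) i j := by
  refine ReflTransGen.mono (fun a b hab => ?_) i j (reflTransGen_of_isPreconnected_iUnion
    (fun i => (hP.image (hS i)).isClosed) (fun i => hPne.image _) hconn i j)
  by_cases h : a = b
  · subst h
    simpa using hKne
  · exact hab.mono (hPK a b h)

theorem inter_image_compList_subset {E : Type*} [NormedAddCommGroup E] [NormedSpace ℝ E]
    [FiniteDimensional ℝ E] (hE : finrank ℝ E = 2) {m : ℕ} {S : Fin m → E →ᵃ[ℝ] E}
    {P V K : Set E} (hPK : P = convexHull ℝ K) (hK : K = ⋃ i, S i '' K)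
    (hKconn : IsPreconnected K) (hVK : V ⊆ K) (hSP : ∀ i, S i '' P ⊆ P)
    (hSV : ∀ i j, i ≠ j → S i '' P ∩ S j '' P ⊆ S j '' V) (w : List (Fin m)) :
    K ∩ compList (fun i => ⇑(S i)) w '' P ⊆ compList (fun i => ⇑(S i)) w '' K := by
  induction w with
  | nil => simp only [compList, image_id, inter_subset_left]
  | cons j v ih =>
    rw [image_compList_cons, image_compList_cons]
    by_cases hj : Injective (S j)
    · rintro _ ⟨hxK, z, hzP, rfl⟩
      have hzK : z ∈ K := by
        obtain ⟨i, y, hyK, hyz⟩ := mem_iUnion.1 (hK ▸ hxK)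
        by_cases hij : i = j
        · subst hij
          exact hj hyz ▸ hyK
        · obtain ⟨u, huV, huz⟩ := hSV i j hij
            ⟨⟨y, hPK ▸ subset_convexHull ℝ K hyK, hyz⟩, z, image_compList_subset hSP v hzP, rfl⟩
          exact hj huz ▸ hVK huV
      exact mem_image_of_mem _ (ih ⟨hzK, hzP⟩)
    · have hKv : IsPreconnected (compList (fun i => ⇑(S i)) v '' K) :=
        hKconn.image _ (continuous_compList (fun i => (S i).continuous_of_finiteDimensional) v
          ).continuousOn
      rw [hPK, image_compList_convexHull, AffineMap.image_convexHull_eq_of_not_injective hE hj hKv]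
      exact inter_subset_right

theorem polygon_subset_iff_copy_subset_general {m : ℕ}
    (F : Finset (EuclideanSpace ℝ (Fin 2)))
    (P V K : Set (EuclideanSpace ℝ (Fin 2)))
    (hP : P = convexHull ℝ (F : Set (EuclideanSpace ℝ (Fin 2))))
    (hV : V = Set.extremePoints ℝ P)
    (S : Fin m → (EuclideanSpace ℝ (Fin 2)) →ᵃ[ℝ] (EuclideanSpace ℝ (Fin 2)))
    (r : Fin m → NNReal) (hr : ∀ i, r i < 1)
    (hLip : ∀ i, LipschitzWith (r i) (S i))
    (h1 : ∀ i, (S i) '' P ⊆ P)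
    (h2 : V ⊆ ⋃ i, (S i) '' V)
    (h3 : ∀ i j, i ≠ j →
      ((S i) '' P) ∩ ((S j) '' P) = ((S i) '' V) ∩ ((S j) '' V) ∧
      (((S i) '' V) ∩ ((S j) '' V)).Subsingleton)
    (h4 : SimplyConnectedSpace ↥(⋃ i, (S i) '' P))
    (hKne : K.Nonempty) (hKcomp : IsCompact K)
    (hK : K = ⋃ i, (S i) '' K)
    (I J : List (Fin m)) :
    (compList (fun i => ⇑(S i)) I '' P ⊆ compList (fun i => ⇑(S i)) J '' P) ↔
      (compList (fun i => ⇑(S i)) I '' K ⊆ compList (fun i => ⇑(S i)) J '' K) := by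
  obtain ⟨c, hc, hSc⟩ := exists_lipschitzWith_lt_one hr hLip
  have hPcomp : IsCompact P := hP ▸ F.finite_toSet.isCompact_convexHull ℝ
  have hPconv : Convex ℝ P := hP ▸ convex_convexHull ℝ _
  have hUconn : IsConnected (⋃ i, S i '' P) := isConnected_iff_connectedSpace.2 inferInstance
  have hPne : P.Nonempty := (nonempty_iUnion.1 hUconn.nonempty).elim fun _ h => image_nonempty.1 h
  have hSK : ∀ i, S i '' K ⊆ K := fun i =>
    (subset_iUnion (fun i => S i '' K) i).trans hK.symm.subset
  have hKP : K ⊆ P := subset_of_subset_hutchinsonOp hc hSc hPcomp.isClosed hPne (iUnion_subset h1)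
    hKcomp.isBounded hK.subset
  have hVK : V ⊆ K := subset_of_subset_hutchinsonOp hc hSc hKcomp.isClosed hKne (iUnion_subset hSK)
    (hPcomp.isBounded.subset (hV ▸ extremePoints_subset)) h2
  have hPK : P = convexHull ℝ K := by
    refine le_antisymm ?_ (convexHull_min hKP hPconv)
    calc P = convexHull ℝ V := by rw [hV, hP, F.finite_toSet.convexHull_extremePoints_convexHull]
      _ ⊆ convexHull ℝ K := convexHull_mono hVK
  have hchain := reflTransGen_image_inter_nonempty (fun i => (hSc i).continuous) hPcomp hPne
    hUconn.isPreconnected hKne fun a b hab =>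
      (h3 a b hab).1.subset.trans (inter_subset_inter (image_mono hVK) (image_mono hVK))
  have hKconn : IsPreconnected K := isPreconnected_of_hutchinsonOp_eq hc hSc hPcomp
    hPconv.isPreconnected (iUnion_subset h1) hKcomp.isClosed hKne hK.symm hKP hchain
  have hkey := inter_image_compList_subset finrank_euclideanSpace_fin hPK hK hKconn hVK h1
    fun i j hij => (h3 i j hij).1.subset.trans inter_subset_right
  constructor
  · exact fun hIJ x hx => hkey J ⟨image_compList_subset hSK I hx, hIJ (image_mono hKP hx)⟩
  · intro hIJ
    rw [hPK, image_compList_convexHull, image_compList_convexHull]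
    exact convexHull_mono hIJ

/-- for multiindices `𝐢`, `𝐣` of a simply connected self-affine
polygonal system, `P_𝐢 ⊆ P_𝐣` if and only if `K_𝐢 ⊆ K_𝐣`. -/
theorem polygon_subset_iff_copy_subset {m : ℕ}
    (F : Finset (EuclideanSpace ℝ (Fin 2)))
    (P V K : Set (EuclideanSpace ℝ (Fin 2)))
    (hP : P = convexHull ℝ (F : Set (EuclideanSpace ℝ (Fin 2))))
    (hPint : (interior P).Nonempty)
    (hV : V = Set.extremePoints ℝ P)
    (S : Fin m → (EuclideanSpace ℝ (Fin 2)) →ᵃ[ℝ] (EuclideanSpace ℝ (Fin 2)))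
    (r : Fin m → NNReal) (hr : ∀ i, r i < 1)
    (hLip : ∀ i, LipschitzWith (r i) (S i))
    (h1 : ∀ i, (S i) '' P ⊆ P)
    (h2 : V ⊆ ⋃ i, (S i) '' V)
    (h3 : ∀ i j, i ≠ j →
      ((S i) '' P) ∩ ((S j) '' P) = ((S i) '' V) ∩ ((S j) '' V) ∧
      (((S i) '' V) ∩ ((S j) '' V)).Subsingleton)
    (h4 : SimplyConnectedSpace ↥(⋃ i, (S i) '' P))
    (hKne : K.Nonempty) (hKcomp : IsCompact K)
    (hK : K = ⋃ i, (S i) '' K)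
    (I J : List (Fin m)) :
    (compList (fun i => ⇑(S i)) I '' P ⊆ compList (fun i => ⇑(S i)) J '' P) ↔
      (compList (fun i => ⇑(S i)) I '' K ⊆ compList (fun i => ⇑(S i)) J '' K) :=
  polygon_subset_iff_copy_subset_general F P V K hP hV S r hr hLip h1 h2 h3 h4 hKne hKcomp hK I J
end
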